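/- arXiv:math/0210245 — 7 statements merged into one kernel-verified Lean document; each statement's English description precedes it below -/
import Mathlib

section
/- Let α ≥ 3 be an odd integer. Suppose x, y : {1,…,α} → {1,…,α} are functions with x(i) ≠ y(i) for every i, such that every level j ∈ {1,…,α} occurs exactly twice in the multiset {x(1), y(1), x(2), y(2), …, x(α), y(α)}. Then the total skip Skip = Σ_{i=1}^{α} |x(i) − y(i)| satisfies Skip ≤ (α² − 1)/2. -/
private lemma gauss_icc (k : ℕ) : 2 * ∑ t ∈ Finset.Icc 1 k, t = k * (k + 1) := by
  induction k with
  | zero => simp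
  | succ n ih =>
    rw [Finset.sum_Icc_succ_top (by omega), Nat.mul_add, ih]
    ring

private lemma sum_min_icc (m : ℕ) :
    ∑ t ∈ Finset.Icc 1 (2 * m), 2 * min t (2 * m + 1 - t) = 2 * (m * (m + 1)) := by
  have hsplit : Finset.Icc 1 (2 * m) = Finset.Icc 1 m ∪ Finset.Icc (m + 1) (2 * m) := by
    ext t; simp only [Finset.mem_Icc, Finset.mem_union]; omega
  have hdisj : Disjoint (Finset.Icc 1 m) (Finset.Icc (m + 1) (2 * m)) := by
    simp only [Finset.disjoint_left, Finset.mem_Icc]; omega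
  rw [hsplit, Finset.sum_union hdisj]
  have h1 : ∑ t ∈ Finset.Icc 1 m, 2 * min t (2 * m + 1 - t)
      = ∑ t ∈ Finset.Icc 1 m, 2 * t := by
    apply Finset.sum_congr rfl; intro t ht
    simp only [Finset.mem_Icc] at ht
    congr 1; omega
  have h2 : ∑ t ∈ Finset.Icc (m + 1) (2 * m), 2 * min t (2 * m + 1 - t)
      = ∑ t ∈ Finset.Icc 1 m, 2 * t := by
    apply Finset.sum_nbij' (fun t => 2 * m + 1 - t) (fun t => 2 * m + 1 - t)
    · intro a ha; simp only [Finset.mem_Icc] at *; omega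
    · intro a ha; simp only [Finset.mem_Icc] at *; omega
    · intro a ha; simp only [Finset.mem_Icc] at *; omega
    · intro a ha; simp only [Finset.mem_Icc] at *; omega
    · intro a ha; simp only [Finset.mem_Icc] at *
      congr 1; omega
  rw [h1, h2, ← Finset.mul_sum]
  have := gauss_icc m
  omega

/-- The total skip of an arc-presentation datum of odd index `α ≥ 3` is at
most `(α² - 1)/2`. -/
theorem skip_le_of_odd (α : ℕ) (hα : 3 ≤ α) (hodd : Odd α)
    (x y : ℕ → ℕ)
    (hx : ∀ i ∈ Finset.Icc 1 α, x i ∈ Finset.Icc 1 α)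
    (hy : ∀ i ∈ Finset.Icc 1 α, y i ∈ Finset.Icc 1 α)
    (hne : ∀ i ∈ Finset.Icc 1 α, x i ≠ y i)
    (htwice : ∀ j ∈ Finset.Icc 1 α,
      ((Finset.Icc 1 α).filter (fun i => x i = j)).card +
      ((Finset.Icc 1 α).filter (fun i => y i = j)).card = 2) :
    ∑ i ∈ Finset.Icc 1 α, |(x i : ℤ) - (y i : ℤ)| ≤ ((α : ℤ) ^ 2 - 1) / 2 := by
  obtain ⟨m, hm⟩ := hodd
  have hm1 : 1 ≤ m := by omega
  -- replace the absolute value by a natural number difference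
  have habs : ∀ i ∈ Finset.Icc 1 α, |(x i : ℤ) - (y i : ℤ)| =
      ((max (x i) (y i) - min (x i) (y i) : ℕ) : ℤ) := by
    intro i _
    rcases le_total (x i) (y i) with h | h
    · rw [max_eq_right h, min_eq_left h, Nat.cast_sub h, abs_sub_comm,
        abs_of_nonneg (sub_nonneg.2 (by exact_mod_cast h))]
    · rw [max_eq_left h, min_eq_right h, Nat.cast_sub h,
        abs_of_nonneg (sub_nonneg.2 (by exact_mod_cast h))]
  rw [Finset.sum_congr rfl habs, ← Nat.cast_sum]
  have hdiv : ((α : ℤ) ^ 2 - 1) / 2 = ((2 * (m * (m + 1)) : ℕ) : ℤ) := by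
    subst hm; push_cast
    have h : ((2 * (m : ℤ) + 1) ^ 2 - 1) = 2 * (2 * (m * (m + 1))) := by ring
    rw [h, Int.mul_ediv_cancel_left _ two_ne_zero]
  rw [hdiv, Nat.cast_le]
  -- now a purely natural-number statement
  have hcard : ∀ i ∈ Finset.Icc 1 α, max (x i) (y i) - min (x i) (y i) =
      ((Finset.Icc 1 (α - 1)).filter
        (fun t => min (x i) (y i) ≤ t ∧ t + 1 ≤ max (x i) (y i))).card := by
    intro i hi
    have hx' := hx i hi; have hy' := hy i hi; have hne' := hne i hi
    simp only [Finset.mem_Icc] at hx' hy'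
    have hset : (Finset.Icc 1 (α - 1)).filter
        (fun t => min (x i) (y i) ≤ t ∧ t + 1 ≤ max (x i) (y i))
        = Finset.Icc (min (x i) (y i)) (max (x i) (y i) - 1) := by
      ext t
      simp only [Finset.mem_filter, Finset.mem_Icc]
      omega
    rw [hset, Nat.card_Icc]
    omega
  rw [Finset.sum_congr rfl hcard]
  have hswap : ∑ i ∈ Finset.Icc 1 α, ((Finset.Icc 1 (α - 1)).filter
        (fun t => min (x i) (y i) ≤ t ∧ t + 1 ≤ max (x i) (y i))).card
      = ∑ t ∈ Finset.Icc 1 (α - 1), ((Finset.Icc 1 α).filter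
        (fun i => min (x i) (y i) ≤ t ∧ t + 1 ≤ max (x i) (y i))).card := by
    simp only [Finset.card_filter]
    exact Finset.sum_comm
  rw [hswap]
  have hbound : ∀ t ∈ Finset.Icc 1 (α - 1), ((Finset.Icc 1 α).filter
        (fun i => min (x i) (y i) ≤ t ∧ t + 1 ≤ max (x i) (y i))).card
      ≤ 2 * min t (α - t) := by
    intro t ht
    simp only [Finset.mem_Icc] at ht
    have hA : ((Finset.Icc 1 α).filter
        (fun i => min (x i) (y i) ≤ t ∧ t + 1 ≤ max (x i) (y i))).card ≤ 2 * t := by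
      have hsub : (Finset.Icc 1 α).filter
          (fun i => min (x i) (y i) ≤ t ∧ t + 1 ≤ max (x i) (y i)) ⊆
          (Finset.Icc 1 t).biUnion (fun j =>
            ((Finset.Icc 1 α).filter (fun i => x i = j)) ∪
            ((Finset.Icc 1 α).filter (fun i => y i = j))) := by
        intro i hi2
        simp only [Finset.mem_filter, Finset.mem_Icc] at hi2
        have hx' := hx i (by simp only [Finset.mem_Icc]; omega)
        have hy' := hy i (by simp only [Finset.mem_Icc]; omega)
        simp only [Finset.mem_Icc] at hx' hy'
        simp only [Finset.mem_biUnion, Finset.mem_union, Finset.mem_filter,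
          Finset.mem_Icc]
        rcases le_total (x i) (y i) with h | h
        · exact ⟨x i, ⟨by omega, by omega⟩, Or.inl ⟨⟨by omega, by omega⟩, rfl⟩⟩
        · exact ⟨y i, ⟨by omega, by omega⟩, Or.inr ⟨⟨by omega, by omega⟩, rfl⟩⟩
      calc ((Finset.Icc 1 α).filter
            (fun i => min (x i) (y i) ≤ t ∧ t + 1 ≤ max (x i) (y i))).card
          ≤ _ := Finset.card_le_card hsub
        _ ≤ ∑ j ∈ Finset.Icc 1 t,
            (((Finset.Icc 1 α).filter (fun i => x i = j)) ∪
             ((Finset.Icc 1 α).filter (fun i => y i = j))).card :=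
          Finset.card_biUnion_le
        _ ≤ ∑ _j ∈ Finset.Icc 1 t, 2 := by
            apply Finset.sum_le_sum
            intro j hj
            simp only [Finset.mem_Icc] at hj
            have h2 := htwice j (by simp only [Finset.mem_Icc]; omega)
            calc _ ≤ _ := Finset.card_union_le _ _
              _ = 2 := h2
        _ = 2 * t := by
            rw [Finset.sum_const, smul_eq_mul, Nat.card_Icc]
            omega
    have hB : ((Finset.Icc 1 α).filter
        (fun i => min (x i) (y i) ≤ t ∧ t + 1 ≤ max (x i) (y i))).card
        ≤ 2 * (α - t) := by
      have hsub : (Finset.Icc 1 α).filter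
          (fun i => min (x i) (y i) ≤ t ∧ t + 1 ≤ max (x i) (y i)) ⊆
          (Finset.Icc (t + 1) α).biUnion (fun j =>
            ((Finset.Icc 1 α).filter (fun i => x i = j)) ∪
            ((Finset.Icc 1 α).filter (fun i => y i = j))) := by
        intro i hi2
        simp only [Finset.mem_filter, Finset.mem_Icc] at hi2
        have hx' := hx i (by simp only [Finset.mem_Icc]; omega)
        have hy' := hy i (by simp only [Finset.mem_Icc]; omega)
        simp only [Finset.mem_Icc] at hx' hy'
        simp only [Finset.mem_biUnion, Finset.mem_union, Finset.mem_filter,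
          Finset.mem_Icc]
        rcases le_total (x i) (y i) with h | h
        · exact ⟨y i, ⟨by omega, by omega⟩, Or.inr ⟨⟨by omega, by omega⟩, rfl⟩⟩
        · exact ⟨x i, ⟨by omega, by omega⟩, Or.inl ⟨⟨by omega, by omega⟩, rfl⟩⟩
      calc ((Finset.Icc 1 α).filter
            (fun i => min (x i) (y i) ≤ t ∧ t + 1 ≤ max (x i) (y i))).card
          ≤ _ := Finset.card_le_card hsub
        _ ≤ ∑ j ∈ Finset.Icc (t + 1) α,
            (((Finset.Icc 1 α).filter (fun i => x i = j)) ∪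
             ((Finset.Icc 1 α).filter (fun i => y i = j))).card :=
          Finset.card_biUnion_le
        _ ≤ ∑ _j ∈ Finset.Icc (t + 1) α, 2 := by
            apply Finset.sum_le_sum
            intro j hj
            simp only [Finset.mem_Icc] at hj
            have h2 := htwice j (by simp only [Finset.mem_Icc]; omega)
            calc _ ≤ _ := Finset.card_union_le _ _
              _ = 2 := h2
        _ = 2 * (α - t) := by
            rw [Finset.sum_const, smul_eq_mul, Nat.card_Icc]
            omega
    omega
  calc ∑ t ∈ Finset.Icc 1 (α - 1), ((Finset.Icc 1 α).filter
        (fun i => min (x i) (y i) ≤ t ∧ t + 1 ≤ max (x i) (y i))).card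
      ≤ ∑ t ∈ Finset.Icc 1 (α - 1), 2 * min t (α - t) := Finset.sum_le_sum hbound
    _ = 2 * (m * (m + 1)) := by
        subst hm
        have h1 : 2 * m + 1 - 1 = 2 * m := by omega
        rw [h1]
        have h2 : ∀ t ∈ Finset.Icc 1 (2 * m),
            2 * min t (2 * m + 1 - t) = 2 * min t (2 * m + 1 - t) := fun _ _ => rfl
        exact sum_min_icc m
end

section
/- Let α ≥ 2 be an even integer. Suppose x, y : {1,…,α} → {1,…,α} are functions with x(i) ≠ y(i) for every i, such that every level j ∈ {1,…,α} occurs exactly twice in the multiset {x(1), y(1), x(2), y(2), …, x(α), y(α)}. Then the total skip Skip = Σ_{i=1}^{α} |x(i) − y(i)| satisfies Skip ≤ α²/2. -/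
/-!
Consider the cut between levels `j` and `j + 1`, for `0 ≤ j < α`. An arc contributes `|x i - y i|` to the
skip and crosses exactly that many cuts, so the skip is the total number of crossings over all
cuts. An arc crossing cut `j` has an endpoint among the levels `1, …, j`, which carry `2 j`
endpoints in all, and one among the levels `j + 1, …, α`, which carry `2 (α - j)`; hence at most
`2 min(j, α - j)` arcs cross cut `j`, and these bounds add up to `⌊α² / 2⌋`.
-/

open Finset

section Arcs

variable {ι : Type*} (s : Finset ι) (x y : ι → ℕ)

def crossings (j : ℕ) : ℕ :=
  #{i ∈ s | j ∈ Ico (min (x i) (y i)) (max (x i) (y i))}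

lemma sum_max_sub_min_eq_sum_crossings {n : ℕ} (hn : ∀ i ∈ s, max (x i) (y i) ≤ n) :
    ∑ i ∈ s, (max (x i) (y i) - min (x i) (y i)) = ∑ j ∈ range n, crossings s x y j := by
  refine Eq.trans ?_ (sum_card_bipartiteAbove_eq_sum_card_bipartiteBelow
    (fun i j => j ∈ Ico (min (x i) (y i)) (max (x i) (y i))))
  refine sum_congr rfl fun i hi => ?_
  rw [bipartiteAbove, ← Nat.card_Ico]
  congr 1
  ext j
  have := hn i hi
  simp only [mem_filter, mem_range, mem_Ico]
  omega

variable {s x y}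

lemma card_filter_mem_add_card_filter_mem {t : Finset ℕ}
    (htwice : ∀ k ∈ t, #{i ∈ s | x i = k} + #{i ∈ s | y i = k} = 2) :
    #{i ∈ s | x i ∈ t} + #{i ∈ s | y i ∈ t} = 2 * #t := by
  rw [← sum_card_fiberwise_eq_card_filter, ← sum_card_fiberwise_eq_card_filter,
    ← sum_add_distrib, sum_congr rfl htwice, sum_const, smul_eq_mul, mul_comm]

lemma crossings_le_two_mul_card {t : Finset ℕ} {j : ℕ}
    (htwice : ∀ k ∈ t, #{i ∈ s | x i = k} + #{i ∈ s | y i = k} = 2)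
    (hcross : ∀ i ∈ s, j ∈ Ico (min (x i) (y i)) (max (x i) (y i)) → x i ∈ t ∨ y i ∈ t) :
    crossings s x y j ≤ 2 * #t := by
  classical
  calc crossings s x y j ≤ #({i ∈ s | x i ∈ t} ∪ {i ∈ s | y i ∈ t}) := by
        refine card_le_card fun i hi => ?_
        rw [mem_filter] at hi
        simpa only [mem_union, mem_filter, ← and_or_left] using ⟨hi.1, hcross i hi.1 hi.2⟩
    _ ≤ #{i ∈ s | x i ∈ t} + #{i ∈ s | y i ∈ t} := card_union_le _ _
    _ = 2 * #t := card_filter_mem_add_card_filter_mem htwice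

lemma crossings_le_two_mul_min {α j : ℕ} (hx : ∀ i ∈ s, x i ∈ Icc 1 α)
    (hy : ∀ i ∈ s, y i ∈ Icc 1 α)
    (htwice : ∀ k ∈ Icc 1 α, #{i ∈ s | x i = k} + #{i ∈ s | y i = k} = 2) (hj : j ≤ α) :
    crossings s x y j ≤ 2 * min j (α - j) := by
  rw [← min_mul_mul_left]
  refine le_min ?_ ?_
  · simpa using crossings_le_two_mul_card (t := Icc 1 j)
      (fun k hk => htwice k (Icc_subset_Icc_right hj hk)) fun i hi hij => by
        have := hx i hi
        have := hy i hi
        simp only [mem_Icc, mem_Ico] at *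
        omega
  · simpa using crossings_le_two_mul_card (t := Icc (j + 1) α)
      (fun k hk => htwice k (Icc_subset_Icc_left (Nat.le_add_left 1 j) hk)) fun i hi hij => by
        have := hx i hi
        have := hy i hi
        simp only [mem_Icc, mem_Ico] at *
        omega

end Arcs

lemma four_mul_sum_min_le_sq (n : ℕ) : 4 * ∑ j ∈ range n, min j (n - j) ≤ n ^ 2 := by
  induction n using Nat.twoStepInduction with
  | zero => simp
  | one => simp
  | more n ih _ =>
    have hshift : ∀ j ∈ range (n + 1), min (j + 1) (n + 2 - (j + 1)) = min j (n - j) + 1 := by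
      intro j hj
      rw [mem_range] at hj
      omega
    rw [sum_range_succ', sum_congr rfl hshift, sum_range_succ, sum_add_distrib]
    simp only [sum_const, card_range, smul_eq_mul, Nat.sub_self, _root_.min_zero, zero_min]
    nlinarith

theorem skip_le_of_even_general (α : ℕ)
    (x y : ℕ → ℕ)
    (hx : ∀ i ∈ Finset.Icc 1 α, x i ∈ Finset.Icc 1 α)
    (hy : ∀ i ∈ Finset.Icc 1 α, y i ∈ Finset.Icc 1 α)
    (htwice : ∀ j ∈ Finset.Icc 1 α,
      ((Finset.Icc 1 α).filter (fun i => x i = j)).card +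
      ((Finset.Icc 1 α).filter (fun i => y i = j)).card = 2) :
    ∑ i ∈ Finset.Icc 1 α, |(x i : ℤ) - (y i : ℤ)| ≤ (α : ℤ) ^ 2 / 2 := by
  have hmax : ∀ i ∈ Icc 1 α, max (x i) (y i) ≤ α := fun i hi =>
    max_le (mem_Icc.1 (hx i hi)).2 (mem_Icc.1 (hy i hi)).2
  have hskip : ∑ i ∈ Icc 1 α, (max (x i) (y i) - min (x i) (y i)) ≤ α ^ 2 / 2 :=
    calc ∑ i ∈ Icc 1 α, (max (x i) (y i) - min (x i) (y i))
        = ∑ j ∈ range α, crossings (Icc 1 α) x y j := sum_max_sub_min_eq_sum_crossings _ _ _ hmax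
      _ ≤ ∑ j ∈ range α, 2 * min j (α - j) := sum_le_sum fun j hj =>
          crossings_le_two_mul_min hx hy htwice (mem_range.1 hj).le
      _ ≤ α ^ 2 / 2 := by
          rw [← mul_sum, Nat.le_div_iff_mul_le two_pos]
          linarith [four_mul_sum_min_le_sq α]
  calc ∑ i ∈ Icc 1 α, |(x i : ℤ) - (y i : ℤ)|
      = ((∑ i ∈ Icc 1 α, (max (x i) (y i) - min (x i) (y i)) : ℕ) : ℤ) := by
        push_cast [Nat.cast_sub min_le_max]
        simp only [max_sub_min_eq_abs']
    _ ≤ ((α ^ 2 / 2 : ℕ) : ℤ) := by exact_mod_cast hskip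
    _ = (α : ℤ) ^ 2 / 2 := by push_cast; rfl

/-- The total skip of an arc-presentation datum of even index `α ≥ 2` is at
most `α²/2`. -/
theorem skip_le_of_even (α : ℕ) (hα : 2 ≤ α) (heven : Even α)
    (x y : ℕ → ℕ)
    (hx : ∀ i ∈ Finset.Icc 1 α, x i ∈ Finset.Icc 1 α)
    (hy : ∀ i ∈ Finset.Icc 1 α, y i ∈ Finset.Icc 1 α)
    (hne : ∀ i ∈ Finset.Icc 1 α, x i ≠ y i)
    (htwice : ∀ j ∈ Finset.Icc 1 α,
      ((Finset.Icc 1 α).filter (fun i => x i = j)).card +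
      ((Finset.Icc 1 α).filter (fun i => y i = j)).card = 2) :
    ∑ i ∈ Finset.Icc 1 α, |(x i : ℤ) - (y i : ℤ)| ≤ (α : ℤ) ^ 2 / 2 :=
  skip_le_of_even_general α x y hx hy htwice
end

section
/- Let α ≥ 2 be an integer. Suppose x, y : {1,…,α} → {1,…,α} are functions with x(i) ≠ y(i) for every i, such that every level j ∈ {1,…,α} occurs exactly twice in the multiset {x(1), y(1), …, x(α), y(α)}. Then the total skip Skip = Σ_{i=1}^{α} |x(i) − y(i)| satisfies Skip ≤ ⌊α²/2⌋. -/
theorem keyval : ∀ n : ℕ, ∑ j ∈ Finset.Ico 1 n, 2 * min j (n - j) = n ^ 2 / 2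
  | 0 => by simp
  | 1 => by simp
  | (n + 2) => by
    have h1 : ∑ j ∈ Finset.Ico 1 (n + 2), 2 * min j (n + 2 - j)
        = ∑ j ∈ Finset.range (n + 1), 2 * min (j + 1) (n + 1 - j) := by
      rw [Finset.sum_Ico_eq_sum_range]
      apply Finset.sum_congr (by norm_num)
      intro j hj
      simp only [Finset.mem_range] at hj
      omega
    have h2 : ∀ j ∈ Finset.range (n + 1), 2 * min (j + 1) (n + 1 - j)
        = 2 * min j (n - j) + 2 := by
      intro j hj
      simp only [Finset.mem_range] at hj
      omega
    have h3 : ∑ j ∈ Finset.range (n + 1), 2 * min j (n - j)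
        = ∑ j ∈ Finset.Ico 1 n, 2 * min j (n - j) := by
      rw [Finset.range_eq_Ico]
      rcases Nat.eq_zero_or_pos n with rfl | hn
      · simp
      rw [← Finset.sum_Ico_consecutive _ (Nat.zero_le 1) (by omega : 1 ≤ n + 1),
        ← Finset.sum_Ico_consecutive _ (by omega : (1:ℕ) ≤ n) (by omega : n ≤ n + 1)]
      simp
    rw [h1, Finset.sum_congr rfl h2, Finset.sum_add_distrib, h3, keyval n]
    simp only [Finset.sum_const, Finset.card_range, smul_eq_mul]
    have hsq : (n + 2) ^ 2 = n ^ 2 + 4 * n + 4 := by ring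
    omega

/-- The total skip of an arc-presentation datum of index `α ≥ 2` is at most
`⌊α²/2⌋`. -/
theorem skip_le_floor (α : ℕ) (hα : 2 ≤ α)
    (x y : ℕ → ℕ)
    (hx : ∀ i ∈ Finset.Icc 1 α, x i ∈ Finset.Icc 1 α)
    (hy : ∀ i ∈ Finset.Icc 1 α, y i ∈ Finset.Icc 1 α)
    (hne : ∀ i ∈ Finset.Icc 1 α, x i ≠ y i)
    (htwice : ∀ j ∈ Finset.Icc 1 α,
      ((Finset.Icc 1 α).filter (fun i => x i = j)).card +
      ((Finset.Icc 1 α).filter (fun i => y i = j)).card = 2) :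
    ∑ i ∈ Finset.Icc 1 α, |(x i : ℤ) - (y i : ℤ)| ≤ ((α ^ 2 / 2 : ℕ) : ℤ) := by
  set S := Finset.Icc 1 α with hS
  -- replace abs values by natural subtraction
  have habs : ∑ i ∈ S, |(x i : ℤ) - (y i : ℤ)|
      = ((∑ i ∈ S, (max (x i) (y i) - min (x i) (y i)) : ℕ) : ℤ) := by
    rw [Nat.cast_sum]
    apply Finset.sum_congr rfl
    intro i _
    rcases le_total (x i) (y i) with h | h
    · rw [max_eq_right h, min_eq_left h, abs_sub_comm,
        abs_of_nonneg (sub_nonneg.2 (Nat.cast_le.2 h)), Nat.cast_sub h]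
    · rw [max_eq_left h, min_eq_right h,
        abs_of_nonneg (sub_nonneg.2 (Nat.cast_le.2 h)), Nat.cast_sub h]
  rw [habs, Nat.cast_le]
  -- per-arc expansion into gap indicators
  have hexp : ∀ i ∈ S, max (x i) (y i) - min (x i) (y i)
      = ∑ j ∈ Finset.Ico 1 α,
          (if min (x i) (y i) ≤ j ∧ j < max (x i) (y i) then 1 else 0) := by
    intro i hi
    have hx1 := hx i hi
    have hy1 := hy i hi
    simp only [hS, Finset.mem_Icc] at hx1 hy1
    have hfilter : (Finset.Ico 1 α).filter
        (fun j => min (x i) (y i) ≤ j ∧ j < max (x i) (y i))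
        = Finset.Ico (min (x i) (y i)) (max (x i) (y i)) := by
      ext j
      simp only [Finset.mem_filter, Finset.mem_Ico]
      omega
    rw [← Finset.card_filter, hfilter, Nat.card_Ico]
  rw [Finset.sum_congr rfl hexp, Finset.sum_comm]
  -- count endpoints below / above each gap
  have hcount : ∀ j ∈ Finset.Ico 1 α,
      (∑ i ∈ S, (if min (x i) (y i) ≤ j ∧ j < max (x i) (y i) then 1 else 0))
        ≤ 2 * min j (α - j) := by
    intro j hj
    simp only [Finset.mem_Ico] at hj
    -- generic counting lemma: number of i with z i in Icc a b
    have count : ∀ z : ℕ → ℕ, (∀ i ∈ S, z i ∈ S) → ∀ a b : ℕ,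
        (∑ i ∈ S, (if z i ∈ Finset.Icc a b then 1 else 0))
          = ∑ k ∈ Finset.Icc a b, ((S.filter (fun i => z i = k)).card) := by
      intro z hz a b
      have : ∀ i ∈ S, (if z i ∈ Finset.Icc a b then 1 else 0)
          = ∑ k ∈ Finset.Icc a b, (if z i = k then 1 else 0) := by
        intro i hi
        rw [Finset.sum_ite_eq]
      rw [Finset.sum_congr rfl this, Finset.sum_comm]
      apply Finset.sum_congr rfl
      intro k _
      rw [Finset.card_filter]
    have low : ∀ z : ℕ → ℕ, (∀ i ∈ S, z i ∈ S) →
        (∑ i ∈ S, (if z i ≤ j then 1 else 0))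
          = ∑ k ∈ Finset.Icc 1 j, ((S.filter (fun i => z i = k)).card) := by
      intro z hz
      rw [← count z hz 1 j]
      apply Finset.sum_congr rfl
      intro i hi
      have h1 := hz i hi
      simp only [hS, Finset.mem_Icc] at h1 ⊢
      congr 1
      simp only [eq_iff_iff]
      omega
    have high : ∀ z : ℕ → ℕ, (∀ i ∈ S, z i ∈ S) →
        (∑ i ∈ S, (if j < z i then 1 else 0))
          = ∑ k ∈ Finset.Icc (j + 1) α, ((S.filter (fun i => z i = k)).card) := by
      intro z hz
      rw [← count z hz (j + 1) α]
      apply Finset.sum_congr rfl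
      intro i hi
      have h1 := hz i hi
      simp only [hS, Finset.mem_Icc] at h1 ⊢
      congr 1
      simp only [eq_iff_iff]
      omega
    have hlowsum : (∑ k ∈ Finset.Icc 1 j,
        ((S.filter (fun i => x i = k)).card + (S.filter (fun i => y i = k)).card)) = 2 * j := by
      rw [Finset.sum_congr rfl (fun k hk => htwice k (by
        simp only [hS, Finset.mem_Icc] at hk ⊢; omega))]
      simp [Nat.card_Icc]
      omega
    have hhighsum : (∑ k ∈ Finset.Icc (j + 1) α,
        ((S.filter (fun i => x i = k)).card + (S.filter (fun i => y i = k)).card))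
          = 2 * (α - j) := by
      rw [Finset.sum_congr rfl (fun k hk => htwice k (by
        simp only [hS, Finset.mem_Icc] at hk ⊢; omega))]
      simp [Nat.card_Icc]
      omega
    have hA : (∑ i ∈ S, (if min (x i) (y i) ≤ j ∧ j < max (x i) (y i) then 1 else 0))
        ≤ 2 * j := by
      calc (∑ i ∈ S, (if min (x i) (y i) ≤ j ∧ j < max (x i) (y i) then 1 else 0))
          ≤ ∑ i ∈ S, ((if x i ≤ j then 1 else 0) + (if y i ≤ j then 1 else 0)) := by
            apply Finset.sum_le_sum
            intro i hi
            split_ifs <;> omega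
        _ = 2 * j := by
            rw [Finset.sum_add_distrib, low x hx, low y hy, ← Finset.sum_add_distrib,
              hlowsum]
    have hB : (∑ i ∈ S, (if min (x i) (y i) ≤ j ∧ j < max (x i) (y i) then 1 else 0))
        ≤ 2 * (α - j) := by
      calc (∑ i ∈ S, (if min (x i) (y i) ≤ j ∧ j < max (x i) (y i) then 1 else 0))
          ≤ ∑ i ∈ S, ((if j < x i then 1 else 0) + (if j < y i then 1 else 0)) := by
            apply Finset.sum_le_sum
            intro i hi
            split_ifs <;> omega
        _ = 2 * (α - j) := by
            rw [Finset.sum_add_distrib, high x hx, high y hy, ← Finset.sum_add_distrib,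
              hhighsum]
    omega
  calc ∑ j ∈ Finset.Ico 1 α, ∑ i ∈ S,
        (if min (x i) (y i) ≤ j ∧ j < max (x i) (y i) then 1 else 0)
      ≤ ∑ j ∈ Finset.Ico 1 α, 2 * min j (α - j) := Finset.sum_le_sum hcount
    _ = α ^ 2 / 2 := keyval α
end

section
/- For every even integer α ≥ 2 there exist functions x, y : {1,…,α} → {1,…,α} with x(i) ≠ y(i) for every i, such that every level j ∈ {1,…,α} occurs exactly twice in the multiset {x(1), y(1), …, x(α), y(α)}, and such that Σ_{i=1}^{α} |x(i) − y(i)| = α²/2. (Hence the bound Skip ≤ α²/2 for even arc-index is sharp.) -/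
/-- For every even `α ≥ 2` there is an arc-presentation datum of index `α`
whose total skip is exactly `α²/2`: the bound for even arc-index is sharp. -/
theorem skip_bound_sharp_even (α : ℕ) (hα : 2 ≤ α) (heven : Even α) :
    ∃ x y : ℕ → ℕ,
      (∀ i ∈ Finset.Icc 1 α, x i ∈ Finset.Icc 1 α) ∧
      (∀ i ∈ Finset.Icc 1 α, y i ∈ Finset.Icc 1 α) ∧
      (∀ i ∈ Finset.Icc 1 α, x i ≠ y i) ∧
      (∀ j ∈ Finset.Icc 1 α,
        ((Finset.Icc 1 α).filter (fun i => x i = j)).card +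
        ((Finset.Icc 1 α).filter (fun i => y i = j)).card = 2) ∧
      ∑ i ∈ Finset.Icc 1 α, |(x i : ℤ) - (y i : ℤ)| = (α : ℤ) ^ 2 / 2 := by
  obtain ⟨k, hk⟩ := heven
  have hkα : α = 2 * k := by omega
  have hk1 : 1 ≤ k := by omega
  refine ⟨fun i => if i ≤ k then i else i - k, fun i => if i ≤ k then i + k else i,
    ?_, ?_, ?_, ?_, ?_⟩
  · intro i hi
    simp only [Finset.mem_Icc] at hi ⊢
    split <;> omega
  · intro i hi
    simp only [Finset.mem_Icc] at hi ⊢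
    split <;> omega
  · intro i hi
    simp only [Finset.mem_Icc] at hi
    dsimp only
    split <;> omega
  · intro j hj
    simp only [Finset.mem_Icc] at hj
    by_cases hjk : j ≤ k
    · have h1 : (Finset.Icc 1 α).filter (fun i => (if i ≤ k then i else i - k) = j)
          = {j, j + k} := by
        ext i
        simp only [Finset.mem_filter, Finset.mem_Icc, Finset.mem_insert, Finset.mem_singleton]
        split <;> omega
      have h2 : (Finset.Icc 1 α).filter (fun i => (if i ≤ k then i + k else i) = j)
          = ∅ := by
        ext i
        simp only [Finset.mem_filter, Finset.mem_Icc, Finset.notMem_empty, iff_false]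
        rintro ⟨hi, hx⟩
        split at hx <;> omega
      rw [h1, h2]
      rw [Finset.card_insert_of_notMem (by simp; omega)]
      simp
    · have h1 : (Finset.Icc 1 α).filter (fun i => (if i ≤ k then i else i - k) = j)
          = ∅ := by
        ext i
        simp only [Finset.mem_filter, Finset.mem_Icc, Finset.notMem_empty, iff_false]
        rintro ⟨hi, hx⟩
        split at hx <;> omega
      have h2 : (Finset.Icc 1 α).filter (fun i => (if i ≤ k then i + k else i) = j)
          = {j - k, j} := by
        ext i
        simp only [Finset.mem_filter, Finset.mem_Icc, Finset.mem_insert, Finset.mem_singleton]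
        split <;> omega
      rw [h1, h2]
      rw [Finset.card_insert_of_notMem (by simp; omega)]
      simp
  · have hsum : ∀ i ∈ Finset.Icc 1 α,
        |((if i ≤ k then i else i - k : ℕ) : ℤ) - ((if i ≤ k then i + k else i : ℕ) : ℤ)|
          = (k : ℤ) := by
      intro i hi
      simp only [Finset.mem_Icc] at hi
      by_cases h : i ≤ k
      · simp only [h, if_pos]
        push_cast
        rw [abs_sub_comm, abs_of_nonneg (by omega)]
        ring
      · simp only [h, if_neg, not_false_iff]
        have hc : ((i - k : ℕ) : ℤ) = (i : ℤ) - (k : ℤ) := by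
          rw [Nat.cast_sub (by omega : k ≤ i)]
        rw [hc, abs_of_nonpos (by omega)]
        ring
    rw [Finset.sum_congr rfl hsum]
    rw [Finset.sum_const, Nat.card_Icc, hkα]
    have h1 : (2 * k + 1 - 1 : ℕ) = 2 * k := by omega
    rw [h1]
    have h2 : ((2 * k : ℕ) : ℤ) ^ 2 = 2 * (2 * k * (k : ℤ)) := by push_cast; ring
    rw [h2, Int.mul_ediv_cancel_left _ (by norm_num)]
    ring
end

section
/- For every odd integer α ≥ 3 there exist functions x, y : {1,…,α} → {1,…,α} with x(i) ≠ y(i) for every i, such that every level j ∈ {1,…,α} occurs exactly twice in the multiset {x(1), y(1), …, x(α), y(α)}, and such that Σ_{i=1}^{α} |x(i) − y(i)| = (α² − 1)/2. (Hence the bound Skip ≤ (α² − 1)/2 for odd arc-index is sharp.) -/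
/-- For every odd `α ≥ 3` there is an arc-presentation datum of index `α`
whose total skip is exactly `(α² - 1)/2`: the bound for odd arc-index is
sharp. -/
theorem skip_bound_sharp_odd (α : ℕ) (hα : 3 ≤ α) (hodd : Odd α) :
    ∃ x y : ℕ → ℕ,
      (∀ i ∈ Finset.Icc 1 α, x i ∈ Finset.Icc 1 α) ∧
      (∀ i ∈ Finset.Icc 1 α, y i ∈ Finset.Icc 1 α) ∧
      (∀ i ∈ Finset.Icc 1 α, x i ≠ y i) ∧
      (∀ j ∈ Finset.Icc 1 α,
        ((Finset.Icc 1 α).filter (fun i => x i = j)).card +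
        ((Finset.Icc 1 α).filter (fun i => y i = j)).card = 2) ∧
      ∑ i ∈ Finset.Icc 1 α, |(x i : ℤ) - (y i : ℤ)| = ((α : ℤ) ^ 2 - 1) / 2 := by
  obtain ⟨s, hs⟩ := hodd
  have hs1 : 1 ≤ s := by omega
  refine ⟨fun i => i, fun i => if i ≤ s + 1 then i + s else i - (s + 1), ?_, ?_, ?_, ?_, ?_⟩
  · intro i hi; exact hi
  · intro i hi
    simp only [Finset.mem_Icc] at hi ⊢
    split_ifs <;> omega
  · intro i hi
    simp only [Finset.mem_Icc] at hi
    simp only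
    split_ifs <;> omega
  · intro j hj
    simp only [Finset.mem_Icc] at hj
    have h1 : (Finset.Icc 1 α).filter (fun i => i = j) = {j} := by
      ext i
      simp only [Finset.mem_filter, Finset.mem_Icc, Finset.mem_singleton]
      omega
    have h2 : (Finset.Icc 1 α).filter
        (fun i => (if i ≤ s + 1 then i + s else i - (s + 1)) = j)
        = {if s + 1 ≤ j then j - s else j + s + 1} := by
      ext i
      simp only [Finset.mem_filter, Finset.mem_Icc, Finset.mem_singleton]
      split_ifs <;> omega
    rw [h1, h2]
    simp
  · have hsplit : ∀ i ∈ Finset.Icc 1 α,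
        |(i : ℤ) - ((if i ≤ s + 1 then i + s else i - (s + 1) : ℕ) : ℤ)|
          = if i ≤ s + 1 then (s : ℤ) else (s : ℤ) + 1 := by
      intro i hi
      simp only [Finset.mem_Icc] at hi
      split_ifs with h
      · push_cast
        rw [abs_sub_comm]
        rw [abs_of_nonneg (by push_cast; omega)]
        push_cast; ring
      · have : ((i - (s + 1) : ℕ) : ℤ) = (i : ℤ) - (s + 1) := by
          push_cast [Nat.cast_sub (by omega : s + 1 ≤ i)]; ring
        rw [this, abs_of_nonneg (by omega)]
        ring
    rw [Finset.sum_congr rfl hsplit, Finset.sum_ite]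
    have hf1 : (Finset.Icc 1 α).filter (fun i => i ≤ s + 1) = Finset.Icc 1 (s + 1) := by
      ext i; simp only [Finset.mem_filter, Finset.mem_Icc]; omega
    have hf2 : (Finset.Icc 1 α).filter (fun i => ¬ i ≤ s + 1) = Finset.Icc (s + 2) α := by
      ext i; simp only [Finset.mem_filter, Finset.mem_Icc]; omega
    rw [hf1, hf2, Finset.sum_const, Finset.sum_const, Nat.card_Icc, Nat.card_Icc]
    have hc1 : s + 1 + 1 - 1 = s + 1 := by omega
    have hc2 : α + 1 - (s + 2) = s := by omega
    rw [hc1, hc2]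
    have : (α : ℤ) = 2 * s + 1 := by exact_mod_cast congrArg (Nat.cast : ℕ → ℤ) hs
    rw [this]
    push_cast
    ring_nf
    omega
end

section
/- For every real number x with 0 < x < π, one has 1/tan(x) ≤ 1/x − x/3, i.e. cot x ≤ 1/x − x/3. -/
/-!
Clearing denominators, the claim reads `3x cos x ≤ (3 - x²) sin x`. The difference
`g x = (3 - x²) sin x - 3x cos x` vanishes at `0` and has derivative `x (sin x - x cos x)`;
in turn `sin x - x cos x` vanishes at `0` and has derivative `x sin x`, which is nonnegative on
`[0, π]`. Two monotonicity arguments give `g ≥ 0` on `[0, π]`.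
-/

open Real Set

theorem nonneg_of_hasDerivAt_of_nonneg {f f' : ℝ → ℝ} {a b y : ℝ}
    (hf : ∀ t, HasDerivAt f (f' t) t) (hf' : ∀ t ∈ Ioo a b, 0 ≤ f' t) (ha : 0 ≤ f a)
    (hy : y ∈ Icc a b) : 0 ≤ f y := by
  have hmono : MonotoneOn f (Icc a b) := by
    refine monotoneOn_of_hasDerivWithinAt_nonneg (convex_Icc a b)
      (fun t _ ↦ (hf t).continuousAt.continuousWithinAt) (fun t _ ↦ (hf t).hasDerivWithinAt) ?_
    rwa [interior_Icc]
  exact ha.trans (hmono (left_mem_Icc.2 (hy.1.trans hy.2)) hy hy.1)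

theorem hasDerivAt_sin_sub_mul_cos (t : ℝ) :
    HasDerivAt (fun t ↦ sin t - t * cos t) (t * sin t) t := by
  refine ((hasDerivAt_sin t).sub ((hasDerivAt_id t).mul (hasDerivAt_cos t))).congr_deriv ?_
  simp only [id_eq]
  ring

theorem mul_cos_le_sin {x : ℝ} (h0 : 0 ≤ x) (h1 : x ≤ π) : x * cos x ≤ sin x := by
  have := nonneg_of_hasDerivAt_of_nonneg hasDerivAt_sin_sub_mul_cos
    (fun t ht ↦ mul_nonneg ht.1.le (sin_nonneg_of_nonneg_of_le_pi ht.1.le ht.2.le))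
    (by simp) ⟨h0, h1⟩
  linarith

theorem hasDerivAt_three_sub_sq_mul_sin_sub (t : ℝ) :
    HasDerivAt (fun t ↦ (3 - t ^ 2) * sin t - 3 * t * cos t) (t * (sin t - t * cos t)) t := by
  refine ((((hasDerivAt_pow 2 t).const_sub 3).mul (hasDerivAt_sin t)).sub
    (((hasDerivAt_id t).const_mul 3).mul (hasDerivAt_cos t))).congr_deriv ?_
  simp only [id_eq]
  ring

theorem three_mul_mul_cos_le {x : ℝ} (h0 : 0 ≤ x) (h1 : x ≤ π) :
    3 * x * cos x ≤ (3 - x ^ 2) * sin x := by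
  have := nonneg_of_hasDerivAt_of_nonneg hasDerivAt_three_sub_sq_mul_sin_sub
    (fun t ht ↦ mul_nonneg ht.1.le (sub_nonneg.2 (mul_cos_le_sin ht.1.le ht.2.le)))
    (by simp) ⟨h0, h1⟩
  linarith

/-- For `0 < x < π`, one has `cot x = 1/tan x ≤ 1/x - x/3`. -/
theorem one_div_tan_le (x : ℝ) (h0 : 0 < x) (h1 : x < π) :
    1 / Real.tan x ≤ 1 / x - x / 3 := by
  have hsin : 0 < sin x := sin_pos_of_pos_of_lt_pi h0 h1
  calc 1 / tan x = cos x / sin x := by rw [tan_eq_sin_div_cos, one_div_div]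
    _ ≤ (3 - x ^ 2) / (3 * x) := by
      rw [div_le_div_iff₀ hsin (by positivity)]
      linarith [three_mul_mul_cos_le h0.le h1.le]
    _ = 1 / x - x / 3 := by field_simp
end

section
/- For every integer α ≥ 3, one has 2α/tan(π/α) + (π − 2)α + α² ≤ 1.64·(α − 2)² + 7.69·(α − 2) + 6.74. -/
/-!
Since `cot x ≤ 1/x - x/3` on `(0, π/2]`, the binding-prism term is at most `2α²/π - 2π/3`.
The remaining inequality is quadratic in `α`; its difference, with `π` replaced by a
six-digit approximation, has negative discriminant.
-/

open Real

namespace Real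

/-- `(3 - y²) sin y - 3 y cos y` vanishes at `0` and has derivative `y (sin y - y cos y) ≥ 0`. -/
lemma three_mul_mul_cos_le_three_sub_sq_mul_sin {x : ℝ} (hx₀ : 0 ≤ x) (hx : x ≤ π / 2) :
    3 * x * cos x ≤ (3 - x ^ 2) * sin x := by
  set f : ℝ → ℝ := fun y => (3 - y ^ 2) * sin y - 3 * y * cos y
  have hf' (y : ℝ) : HasDerivAt f (y * (sin y - y * cos y)) y :=
    ((((hasDerivAt_pow 2 y).const_sub 3).mul (hasDerivAt_sin y)).sub
      (((hasDerivAt_id y).const_mul 3).mul (hasDerivAt_cos y))).congr_deriv (by simp; ring)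
  have hmono : MonotoneOn f (Set.Icc 0 (π / 2)) := by
    refine monotoneOn_of_deriv_nonneg (convex_Icc _ _)
      (fun y _ => (hf' y).continuousAt.continuousWithinAt)
      (fun y _ => (hf' y).differentiableAt.differentiableWithinAt) fun y hy => ?_
    rw [interior_Icc] at hy
    have hcos : 0 < cos y := cos_pos_of_mem_Ioo ⟨by linarith [pi_pos, hy.1], hy.2⟩
    have hy_le_tan : y ≤ sin y / cos y := tan_eq_sin_div_cos y ▸ le_tan hy.1.le hy.2
    rw [(hf' y).deriv]
    exact mul_nonneg hy.1.le (sub_nonneg.2 ((le_div_iff₀ hcos).1 hy_le_tan))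
  simpa [f] using hmono ⟨le_rfl, by positivity⟩ ⟨hx₀, hx⟩ hx₀

lemma inv_tan_le_inv_sub_div_three {x : ℝ} (hx₀ : 0 < x) (hx : x ≤ π / 2) :
    (tan x)⁻¹ ≤ x⁻¹ - x / 3 := by
  have hsin : 0 < sin x := sin_pos_of_pos_of_lt_pi hx₀ (by linarith [pi_pos])
  rw [tan_eq_sin_div_cos, inv_div, div_le_iff₀ hsin]
  have := three_mul_mul_cos_le_three_sub_sq_mul_sin hx₀.le hx
  field_simp
  linarith

end Real

lemma two_mul_div_tan_pi_div_le {a : ℝ} (ha : 2 ≤ a) :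
    2 * a / tan (π / a) ≤ 2 * a ^ 2 / π - 2 * π / 3 := by
  have ha₀ : 0 < a := by linarith
  have hx : π / a ≤ π / 2 := div_le_div_of_nonneg_left pi_pos.le two_pos ha
  calc 2 * a / tan (π / a) = 2 * a * (tan (π / a))⁻¹ := div_eq_mul_inv _ _
    _ ≤ 2 * a * ((π / a)⁻¹ - π / a / 3) := by
      gcongr
      exact inv_tan_le_inv_sub_div_three (by positivity) hx
    _ = 2 * a ^ 2 / π - 2 * π / 3 := by field_simp

lemma ropelength_quadratic_le {a : ℝ} (ha : 0 ≤ a) :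
    2 * a ^ 2 / π - 2 * π / 3 + (π - 2) * a + a ^ 2 ≤
      1.64 * (a - 2) ^ 2 + 7.69 * (a - 2) + 6.74 := by
  have hπ_lo := pi_gt_d6
  have hπ_hi := pi_lt_d6
  have hdiv : 2 * a ^ 2 / π ≤ 2 * a ^ 2 / 3.141592 := by gcongr
  have hπa := mul_le_mul_of_nonneg_left hπ_hi.le ha
  have hsq := sq_nonneg (a - 7 / 4)
  norm_num at *
  linarith

/-- The analytic core of Theorem 1: for every integer `α ≥ 3`, the
ropelength bound obtained from an arc-presentation with `α` half-planes is at
most `1.64·c² + 7.69·c + 6.74` evaluated at crossing number `c = α - 2`. -/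
theorem analytic_core_theorem_one (α : ℕ) (hα : 3 ≤ α) :
    2 * (α : ℝ) / Real.tan (π / α) + (π - 2) * α + (α : ℝ) ^ 2 ≤
      1.64 * ((α : ℝ) - 2) ^ 2 + 7.69 * ((α : ℝ) - 2) + 6.74 := by
  have hα' : (3 : ℝ) ≤ α := by exact_mod_cast hα
  calc 2 * (α : ℝ) / tan (π / α) + (π - 2) * α + (α : ℝ) ^ 2
      ≤ 2 * (α : ℝ) ^ 2 / π - 2 * π / 3 + (π - 2) * α + (α : ℝ) ^ 2 := by
        gcongr
        exact two_mul_div_tan_pi_div_le (by linarith)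
    _ ≤ _ := ropelength_quadratic_le (by positivity)
end
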